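/- arXiv:1510.00833 — 5 statements merged into one kernel-verified Lean document; each statement's English description precedes it below -/
import Mathlib

section
/- If |p| ≥ 2 and |q| ≥ 2, then in BS(p,q) the elements x = a and y = b a b^{-1} generate a non-abelian free subgroup of rank 2; in particular BS(p,q) is non-amenable. -/
/-- The single defining relation of the Baumslag–Solitar group `BS(p,q)`:
`a b^p a⁻¹ (b^q)⁻¹`. -/
def BSRel (p q : ℤ) : Set (FreeGroup Bool) :=
  {FreeGroup.of true * (FreeGroup.of false) ^ p * (FreeGroup.of true)⁻¹ *
    ((FreeGroup.of false) ^ q)⁻¹}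

/-- The Baumslag–Solitar group `BS(p,q) = ⟨a, b ∣ a b^p a⁻¹ = b^q⟩`. -/
abbrev BS (p q : ℤ) : Type := PresentedGroup (BSRel p q)

/-- The generator `a` of `BS(p,q)`. -/
def BSa (p q : ℤ) : BS p q := PresentedGroup.of true

/-- The generator `b` of `BS(p,q)`. -/
def BSb (p q : ℤ) : BS p q := PresentedGroup.of false


/-!
Send `a ↦ t` and `b ↦ b` into the HNN extension of `⟨b⟩ ≅ ℤ` identifying `⟨b^p⟩` with `⟨b^q⟩`
by `b^p ↦ b^q`. A reduced word in `t` and `b t b⁻¹` multiplies out to a word in `t^{±1}` whose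
intermediate base elements are `1` (between two equal letters, hence equal exponents) or `b^{±1}`,
which lies in neither `⟨b^p⟩` nor `⟨b^q⟩` since `|p|, |q| ≥ 2`. So the word has no pinch, and by
Britton's lemma it is nontrivial unless it is empty.
-/

open Function Subgroup

namespace HNNExtension

variable {G : Type*} [Group G] {A B : Subgroup G} (φ : A ≃* B) {ι : Type*} (h : ι → G)

/-- Regrouping `∏ (h iₖ) t^{sₖ} (h iₖ)⁻¹` as `h i₁ · ∏ t^{sₖ} ((h iₖ)⁻¹ h iₖ₊₁)`, with `h iₙ₊₁ := 1`,
gives the head and the letters of a reduced word of the HNN extension. -/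
def conjHead : List (ι × Bool) → G
  | [] => 1
  | (i, _) :: _ => h i

def conjLetters : List (ι × Bool) → List (ℤˣ × G)
  | [] => []
  | (i, s) :: L => (if s then 1 else -1, (h i)⁻¹ * conjHead h L) :: conjLetters L

theorem length_conjLetters : ∀ L : List (ι × Bool), (conjLetters h L).length = L.length
  | [] => rfl
  | _ :: L => congrArg Nat.succ (length_conjLetters L)

theorem prod_conjLetters (L : List (ι × Bool)) :
    of (conjHead h L) * ((conjLetters h L).map fun x => t ^ (x.1 : ℤ) * of x.2).prod =
      (L.map fun x => (cond x.2 (of (h x.1) * t * (of (h x.1))⁻¹)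
        (of (h x.1) * t * (of (h x.1))⁻¹)⁻¹ : HNNExtension G A B φ)).prod := by
  induction L with
  | nil => simp [conjHead, conjLetters]
  | cons x L ih =>
    obtain ⟨i, s⟩ := x
    rw [conjLetters, List.map_cons, List.map_cons, List.prod_cons, List.prod_cons, ← ih]
    cases s <;> simp [conjHead, mul_assoc]

variable {h}

theorem isChain_conjLetters (hA : ∀ i j, i ≠ j → (h i)⁻¹ * h j ∉ A)
    (hB : ∀ i j, i ≠ j → (h i)⁻¹ * h j ∉ B) :
    ∀ {L : List (ι × Bool)}, FreeGroup.IsReduced L →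
      (conjLetters h L).IsChain (fun a b => a.2 ∈ toSubgroup A B a.1 → a.1 = b.1)
  | [], _ => List.isChain_nil
  | [_], _ => List.isChain_singleton _
  | (i, s) :: (j, s') :: L, hL => by
    rw [FreeGroup.isReduced_cons_cons] at hL
    refine List.isChain_cons_cons.mpr ⟨fun hmem => ?_, isChain_conjLetters hA hB hL.2⟩
    by_cases hij : i = j
    · subst hij
      obtain rfl : s = s' := hL.1 rfl
      rfl
    · exfalso
      cases s
      · exact hB i j hij hmem
      · exact hA i j hij hmem

theorem injective_lift_conj_t [DecidableEq ι] (hA : ∀ i j, i ≠ j → (h i)⁻¹ * h j ∉ A)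
    (hB : ∀ i j, i ≠ j → (h i)⁻¹ * h j ∉ B) :
    Injective (FreeGroup.lift fun i => of (h i) * t * (of (h i))⁻¹ :
      FreeGroup ι →* HNNExtension G A B φ) := by
  rw [injective_iff_map_eq_one]
  intro w hw
  let r : NormalWord.ReducedWord G A B :=
    ⟨conjHead h w.toWord, conjLetters h w.toWord,
      isChain_conjLetters hA hB FreeGroup.isReduced_toWord⟩
  have hr : r.prod φ = 1 := by
    rw [← hw, ← FreeGroup.mk_toWord (x := w), FreeGroup.lift_mk]
    exact prod_conjLetters φ h w.toWord
  have hnil := ReducedWord.toList_eq_nil_of_mem_of_range φ r (hr ▸ one_mem _)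
  rw [← FreeGroup.toWord_eq_nil_iff, ← List.length_eq_zero_iff, ← length_conjLetters h]
  exact congrArg List.length hnil

theorem injective_lift_t_and_conj_t {g : G} (hA : g ∉ A) (hB : g ∉ B) :
    Injective (FreeGroup.lift fun c : Bool => if c then t else of g * t * (of g)⁻¹ :
      FreeGroup Bool →* HNNExtension G A B φ) := by
  have hconj := injective_lift_conj_t φ (h := fun c : Bool => if c then 1 else g)
    (by simpa [Bool.forall_bool] using hA) (by simpa [Bool.forall_bool] using hB)
  convert hconj using 4 with c
  cases c <;> simp

end HNNExtension

namespace Subgroup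

variable {G : Type*} [Group G] {x y : G}

noncomputable def zpowersEquivOfInjective (hx : Injective (zpowersHom G x))
    (hy : Injective (zpowersHom G y)) : zpowers x ≃* zpowers y :=
  (MonoidHom.ofInjective hx).symm.trans (MonoidHom.ofInjective hy)

theorem zpowersEquivOfInjective_apply_self (hx : Injective (zpowersHom G x))
    (hy : Injective (zpowersHom G y)) :
    zpowersEquivOfInjective hx hy ⟨x, mem_zpowers x⟩ = ⟨y, mem_zpowers y⟩ := by
  have hx1 : (MonoidHom.ofInjective hx).symm ⟨x, mem_zpowers x⟩ = Multiplicative.ofAdd 1 :=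
    (MulEquiv.symm_apply_eq _).2 (Subtype.ext (by simp [MonoidHom.ofInjective_apply]))
  apply Subtype.ext
  change (MonoidHom.ofInjective hy ((MonoidHom.ofInjective hx).symm ⟨x, mem_zpowers x⟩) : G) = y
  rw [hx1, MonoidHom.ofInjective_apply]
  simp

end Subgroup

namespace BS

variable {p q : ℤ} {H : Type*} [Group H]

def lift (a b : H) (h : a * b ^ p * a⁻¹ = b ^ q) : BS p q →* H :=
  PresentedGroup.toGroup (f := fun c => if c then a else b) <| by
    simp [BSRel, h]

@[simp]
theorem lift_BSa (a b : H) (h : a * b ^ p * a⁻¹ = b ^ q) : lift a b h (BSa p q) = a :=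
  PresentedGroup.toGroup.of _

@[simp]
theorem lift_BSb (a b : H) (h : a * b ^ p * a⁻¹ = b ^ q) : lift a b h (BSb p q) = b :=
  PresentedGroup.toGroup.of _

open HNNExtension Multiplicative

theorem injective_zpowersHom_ofAdd (hp : p ≠ 0) :
    Injective (zpowersHom (Multiplicative ℤ) (ofAdd p)) := by
  intro m n hmn
  simp only [zpowersHom_apply, ← ofAdd_zsmul, smul_eq_mul] at hmn
  exact toAdd.injective (mul_right_cancel₀ hp (ofAdd.injective hmn))

theorem ofAdd_one_notMem_zpowers (hp : 2 ≤ |p|) :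
    (ofAdd 1 : Multiplicative ℤ) ∉ zpowers (ofAdd p) := by
  rintro ⟨n, hn⟩
  simp only [← ofAdd_zsmul, smul_eq_mul] at hn
  rcases Int.eq_one_or_neg_one_of_mul_eq_one' (ofAdd.injective hn) with ⟨-, rfl⟩ | ⟨-, rfl⟩ <;>
    simp at hp

abbrev HNN (hp : p ≠ 0) (hq : q ≠ 0) : Type :=
  HNNExtension (Multiplicative ℤ) (zpowers (ofAdd p)) (zpowers (ofAdd q))
    (zpowersEquivOfInjective (injective_zpowersHom_ofAdd hp) (injective_zpowersHom_ofAdd hq))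

theorem t_mul_zpow_mul_inv_t (hp : p ≠ 0) (hq : q ≠ 0) :
    (t : HNN hp hq) * of (ofAdd 1) ^ p * t⁻¹ = of (ofAdd 1) ^ q := by
  simp only [← map_zpow, ← ofAdd_zsmul, smul_eq_mul, mul_one]
  rw [← equiv_eq_conj ⟨ofAdd p, mem_zpowers _⟩, zpowersEquivOfInjective_apply_self]

noncomputable def toHNN (hp : p ≠ 0) (hq : q ≠ 0) : BS p q →* HNN hp hq :=
  lift t (of (ofAdd 1)) (t_mul_zpow_mul_inv_t hp hq)

theorem toHNN_comp_lift (hp : p ≠ 0) (hq : q ≠ 0) :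
    (toHNN hp hq).comp (FreeGroup.lift fun c : Bool =>
        if c then BSa p q else BSb p q * BSa p q * (BSb p q)⁻¹) =
      FreeGroup.lift fun c : Bool => if c then t else of (ofAdd 1) * t * (of (ofAdd 1))⁻¹ := by
  ext c
  cases c <;> simp [toHNN]

end BS

/-- If `|p| ≥ 2` and `|q| ≥ 2`, then `x = a` and `y = b a b⁻¹` generate a free subgroup of
rank 2 in `BS(p,q)`: the induced homomorphism from the free group on two generators is
injective (in particular its image is a non-abelian free subgroup of rank 2, so `BS(p,q)`
is non-amenable). -/
theorem bs_free_subgroup (p q : ℤ) (hp : 2 ≤ |p|) (hq : 2 ≤ |q|) :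
    Function.Injective
      (FreeGroup.lift (fun t : Bool =>
        if t then BSa p q else BSb p q * BSa p q * (BSb p q)⁻¹) :
        FreeGroup Bool →* BS p q) := by
  have hp0 : p ≠ 0 := by rintro rfl; simp at hp
  have hq0 : q ≠ 0 := by rintro rfl; simp at hq
  refine Injective.of_comp (f := BS.toHNN hp0 hq0) ?_
  rw [← MonoidHom.coe_comp, BS.toHNN_comp_lift]
  exact HNNExtension.injective_lift_t_and_conj_t _
    (BS.ofAdd_one_notMem_zpowers hp) (BS.ofAdd_one_notMem_zpowers hq)
end

section
/- Let G be a finitely generated group with finite generating set S, and let μ be a probability measure on G. If ∑_{g∈G} d_S(1,g)·μ(g) < ∞, where d_S is the word metric, then μ has finite entropy, i.e. ∑_{g∈G} −log₂(μ(g))·μ(g) < ∞. -/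
/-!
A word of length `n` has its letters in the set `S ∪ S⁻¹` of size `k`, so at most `k ^ n`
elements have word norm `n`, and `r ^ d_S(1,g)` with `r = (k + 1)⁻¹` is summable. Splitting
according to whether `μ g ≤ t ^ 2` for `t = r ^ d_S(1,g)` gives
`-μ g log μ g ≤ 2 log (k + 1) d_S(1,g) μ g + 2 t` (by `-x log x ≤ 2 √x` in the first case),
and both terms are summable.
-/

noncomputable def wordNorm {G : Type*} [Group G] (S : Set G) (g : G) : ℕ :=
  sInf {n : ℕ | ∃ L : List G, L.length = n ∧ (∀ x ∈ L, x ∈ S ∨ x⁻¹ ∈ S) ∧ L.prod = g}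

open Finset Real

namespace Real

lemma negMulLog_le_two_mul_sqrt {x : ℝ} (hx : 0 ≤ x) : negMulLog x ≤ 2 * √x := by
  have hsqrt := negMulLog_le_one_sub_self (Real.sqrt_nonneg x)
  have hmul : negMulLog x = 2 * √x * negMulLog √x := by
    conv_lhs => rw [← Real.mul_self_sqrt hx, negMulLog_mul]
    ring
  nlinarith [Real.sqrt_nonneg x]

lemma negMulLog_le_mul_neg_log_add {x t : ℝ} (hx : 0 ≤ x) (ht0 : 0 < t) (ht1 : t ≤ 1) :
    negMulLog x ≤ 2 * (-log t) * x + 2 * t := by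
  have hlogt : 0 ≤ -log t := neg_nonneg.2 (log_nonpos ht0.le ht1)
  rcases le_or_gt x (t ^ 2) with hxt | hxt
  · have hsqrt : √x ≤ t := Real.sqrt_le_iff.2 ⟨ht0.le, hxt⟩
    nlinarith [negMulLog_le_two_mul_sqrt hx]
  · have hlog : 2 * log t ≤ log x := by
      simpa [log_pow] using log_le_log (by positivity) hxt.le
    simp only [negMulLog]
    nlinarith

end Real

lemma summable_pow_of_card_filter_le {α : Type*} (f : α → ℕ) {k : ℕ} {r : ℝ} (hr : 0 ≤ r)
    (hkr : k * r < 1) (hfiber : ∀ n (u : Finset α), #{a ∈ u | f a = n} ≤ k ^ n) :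
    Summable fun a => r ^ f a := by
  classical
  have hgeo : Summable fun n : ℕ => ((k : ℝ) * r) ^ n :=
    summable_geometric_of_lt_one (by positivity) hkr
  refine summable_of_sum_le (c := ∑' n, ((k : ℝ) * r) ^ n) (fun a => by positivity) fun u => ?_
  calc ∑ a ∈ u, r ^ f a = ∑ n ∈ u.image f, #{a ∈ u | f a = n} • r ^ n := sum_comp _ _
    _ ≤ ∑ n ∈ u.image f, ((k : ℝ) * r) ^ n := by
        refine sum_le_sum fun n _ => ?_
        rw [nsmul_eq_mul, mul_pow]
        gcongr
        exact_mod_cast hfiber n u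
    _ ≤ ∑' n, ((k : ℝ) * r) ^ n := hgeo.sum_le_tsum _ fun n _ => by positivity

section WordNorm

variable {G : Type*} [Group G] {S : Set G}

lemma exists_list_length_eq_wordNorm {g : G} (hg : g ∈ Subgroup.closure S) :
    ∃ L : List G, L.length = wordNorm S g ∧ (∀ x ∈ L, x ∈ S ∨ x⁻¹ ∈ S) ∧ L.prod = g := by
  rw [← Subgroup.mem_toSubmonoid, Subgroup.closure_toSubmonoid] at hg
  obtain ⟨L, hLS, hLg⟩ := Submonoid.exists_list_of_mem_closure hg
  exact Nat.sInf_mem (s := {n | ∃ L : List G, L.length = n ∧ _}) ⟨L.length, L, rfl, hLS, hLg⟩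

lemma mem_image_ofFn_prod_of_wordNorm_eq {g : G} (hg : g ∈ Subgroup.closure S) {n : ℕ}
    (hn : wordNorm S g = n) :
    g ∈ (fun f : Fin n → G => (List.ofFn f).prod) '' Set.univ.pi fun _ => S ∪ S⁻¹ := by
  obtain ⟨L, hLn, hLS, hLg⟩ := exists_list_length_eq_wordNorm hg
  rw [hn] at hLn
  subst hLn
  exact ⟨L.get, fun i _ => hLS _ (L.get_mem i), by simp only [List.ofFn_get, hLg]⟩

lemma card_filter_wordNorm_eq_le (hS : S.Finite) (hgen : Subgroup.closure S = ⊤)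
    (n : ℕ) (u : Finset G) : #{g ∈ u | wordNorm S g = n} ≤ (S ∪ S⁻¹).ncard ^ n := by
  classical
  have hT : (S ∪ S⁻¹).Finite := hS.union hS.inv
  calc #{g ∈ u | wordNorm S g = n}
      ≤ #((Fintype.piFinset fun _ : Fin n => hT.toFinset).image
          fun f => (List.ofFn f).prod) := by
        refine card_le_card fun g hg => ?_
        obtain ⟨f, hf, rfl⟩ :=
          mem_image_ofFn_prod_of_wordNorm_eq (hgen ▸ Subgroup.mem_top g) (mem_filter.1 hg).2
        exact mem_image_of_mem _ (Fintype.mem_piFinset.2 fun i => hT.mem_toFinset.2 (hf i trivial))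
    _ ≤ #(Fintype.piFinset fun _ : Fin n => hT.toFinset) := card_image_le
    _ = (S ∪ S⁻¹).ncard ^ n := by
        rw [Fintype.card_piFinset_const, Set.ncard_eq_toFinset_card _ hT]

end WordNorm

/-- If `G` is a group with a finite generating set `S` and `μ` is a probability measure
on `G` with finite first moment `∑ d_S(1,g)·μ(g) < ∞`, then `μ` has finite entropy:
`∑ −log₂(μ(g))·μ(g) < ∞`. -/
theorem finite_entropy_of_finite_first_moment {G : Type*} [Group G]
    (S : Set G) (hS : S.Finite) (hgen : Subgroup.closure S = ⊤)
    (μ : G → ℝ) (hμ0 : ∀ g, 0 ≤ μ g) (hμ1 : HasSum μ 1)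
    (hmom : Summable (fun g => (wordNorm S g : ℝ) * μ g)) :
    Summable (fun g => -Real.logb 2 (μ g) * μ g) := by
  set k := (S ∪ S⁻¹).ncard
  set r : ℝ := ((k : ℝ) + 1)⁻¹
  have hr0 : 0 < r := by positivity
  have hr1 : r ≤ 1 := inv_le_one_of_one_le₀ (by linarith [k.cast_nonneg (α := ℝ)])
  have hkr : k * r < 1 := by
    rw [← div_eq_mul_inv, div_lt_one (by positivity)]
    linarith
  have hball : Summable fun g => r ^ wordNorm S g :=
    summable_pow_of_card_filter_le _ hr0.le hkr (card_filter_wordNorm_eq_le hS hgen)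
  have hbound (g : G) : negMulLog (μ g) ≤
      2 * log (k + 1) * (wordNorm S g * μ g) + 2 * r ^ wordNorm S g := by
    have := negMulLog_le_mul_neg_log_add (hμ0 g) (pow_pos hr0 (wordNorm S g))
      (pow_le_one₀ hr0.le hr1)
    rw [log_pow, log_inv] at this
    linarith
  have hμ_le_one (g : G) : μ g ≤ 1 := le_hasSum hμ1 g fun g' _ => hμ0 g'
  have hent : Summable fun g => negMulLog (μ g) :=
    ((hmom.mul_left _).add (hball.mul_left 2)).of_nonneg_of_le
      (fun g => negMulLog_nonneg (hμ0 g) (hμ_le_one g)) hbound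
  refine (hent.div_const (log 2)).congr fun g => ?_
  simp only [negMulLog, logb]
  ring
end

section
/- Let X₁, X₂, … be i.i.d. ℤ-valued random variables with E[X₁] = δ < 0, let S_n = X₁ + … + X_n, and let (B_k) be a sequence of random variables that are i.i.d. with E[ln(1 + |B₁|)] < ∞. Then the random series ∑_{k=1}^∞ (q/p)^{S_{k−1}} · B_k converges almost surely (where q/p > 1), so the real parts of the affine random walk converge almost surely to a random real number. -/
open MeasureTheory Filter ProbabilityTheory Finset
open Topology

/-- Let `X₁, X₂, …` be i.i.d. ℤ-valued with `E[X₁] = δ < 0`, `S_n = X₁ + … + X_n`, and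
`(B_k)` i.i.d. with `E[ln(1+|B₁|)] < ∞`. Then (for integers `q > p ≥ 1`) the random
series `∑ₖ (q/p)^{S_{k−1}} · B_k` converges absolutely almost surely, i.e. the real parts
of the affine random walk converge a.s. to a random real number. -/
theorem affine_walk_real_parts_converge {Ω : Type*} [MeasurableSpace Ω] (μ : Measure Ω)
    [IsProbabilityMeasure μ] (p q : ℤ) (hp : 1 ≤ p) (hpq : p < q)
    (X : ℕ → Ω → ℤ)
    (hXindep : iIndepFun X μ)
    (hXident : ∀ n, IdentDistrib (X n) (X 0) μ μ)
    (hXint : Integrable (fun ω => (X 0 ω : ℝ)) μ)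
    (δ : ℝ) (hδ : δ < 0) (hE : μ[fun ω => (X 0 ω : ℝ)] = δ)
    (B : ℕ → Ω → ℝ)
    (hBindep : iIndepFun B μ)
    (hBident : ∀ n, IdentDistrib (B n) (B 0) μ μ)
    (hBint : Integrable (fun ω => Real.log (1 + |B 0 ω|)) μ) :
    ∀ᵐ ω ∂μ, Summable (fun k =>
      ((q : ℝ) / p) ^ (∑ i ∈ range k, X i ω) * B k ω) := by
  -- Real-valued versions of the random variables
  set Z : ℕ → Ω → ℝ := fun i ω => (X i ω : ℝ) with hZdef
  set Y : ℕ → Ω → ℝ := fun k ω => Real.log (1 + |B k ω|) with hYdef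
  -- SLLN for Z
  have hcast : Measurable (fun n : ℤ => (n : ℝ)) := measurable_of_countable _
  have hZindep : Pairwise (Function.onFun (IndepFun · · μ) Z) := fun i j hij =>
    (hXindep.comp (fun _ => (fun n : ℤ => (n : ℝ))) (fun _ => hcast)).indepFun hij
  have hZident : ∀ i, IdentDistrib (Z i) (Z 0) μ μ := fun i => (hXident i).comp hcast
  have hSZ := ProbabilityTheory.strong_law_ae Z hXint hZindep hZident
  rw [show μ[Z 0] = δ from hE] at hSZ
  -- SLLN for Y
  have hfY : Measurable (fun x : ℝ => Real.log (1 + |x|)) :=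
    Real.measurable_log.comp (measurable_const.add measurable_abs)
  have hYindep : Pairwise (Function.onFun (IndepFun · · μ) Y) := fun i j hij =>
    (hBindep.comp (fun _ => (fun x : ℝ => Real.log (1 + |x|))) (fun _ => hfY)).indepFun hij
  have hYident : ∀ i, IdentDistrib (Y i) (Y 0) μ μ := fun i => (hBident i).comp hfY
  have hSY := ProbabilityTheory.strong_law_ae Y hBint hYindep hYident
  set m : ℝ := μ[Y 0] with hm
  -- Basic positivity facts
  have hp0 : (0 : ℝ) < (p : ℝ) := by exact_mod_cast lt_of_lt_of_le one_pos hp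
  have hx : (0 : ℝ) < (q : ℝ) / p := by
    apply div_pos _ hp0
    exact_mod_cast lt_trans (lt_of_lt_of_le one_pos hp) hpq
  have hqp1 : (1 : ℝ) < (q : ℝ) / p := by
    rw [lt_div_iff₀ hp0]
    have : (p : ℝ) < (q : ℝ) := by exact_mod_cast hpq
    linarith
  set L : ℝ := Real.log ((q : ℝ) / p) with hLdef
  have hLpos : 0 < L := Real.log_pos hqp1
  have hLδ : L * δ < 0 := mul_neg_of_pos_of_neg hLpos hδ
  filter_upwards [hSZ, hSY] with ω hZω hYω
  -- notation for partial sums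
  set A : ℕ → ℝ := fun k => ∑ i ∈ range k, Z i ω with hA
  set C : ℕ → ℝ := fun k => ∑ i ∈ range k, Y i ω with hC
  have hZω' : Tendsto (fun n : ℕ => (n : ℝ)⁻¹ * A n) atTop (𝓝 δ) := hZω
  have hYω' : Tendsto (fun n : ℕ => (n : ℝ)⁻¹ * C n) atTop (𝓝 m) := hYω
  -- Y k / k → 0
  have hYk : Tendsto (fun k : ℕ => Y k ω / k) atTop (𝓝 0) := by
    have h1 : Tendsto (fun k : ℕ => ((k : ℝ) + 1) / k) atTop (𝓝 1) := by
      have := tendsto_const_nhds.add tendsto_inv_atTop_nhds_zero_nat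
        (f := fun _ : ℕ => (1 : ℝ))
      simp only [add_zero] at this
      apply this.congr'
      filter_upwards [eventually_ge_atTop 1] with k hk
      have hk0 : (k : ℝ) ≠ 0 := by positivity
      field_simp
    have h2 : Tendsto (fun k : ℕ => ((k : ℝ) + 1)⁻¹ * C (k + 1)) atTop (𝓝 m) := by
      have h := hYω'.comp (tendsto_add_atTop_nat 1)
      apply h.congr
      intro k
      simp only [Function.comp]
      push_cast
      ring
    have h3 : Tendsto (fun k : ℕ =>
        (((k : ℝ) + 1)⁻¹ * C (k + 1)) * (((k : ℝ) + 1) / k) - ((k : ℝ)⁻¹ * C k))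
        atTop (𝓝 (m * 1 - m)) := (h2.mul h1).sub hYω'
    rw [mul_one, sub_self] at h3
    apply h3.congr'
    filter_upwards [eventually_ge_atTop 1] with k hk
    have hk0 : (k : ℝ) ≠ 0 := by positivity
    have hk10 : (k : ℝ) + 1 ≠ 0 := by positivity
    have hCsucc : C (k + 1) = C k + Y k ω := by
      simp [hC, Finset.sum_range_succ]
    rw [hCsucc]
    field_simp
    ring
  -- the combined exponent
  have hg : Tendsto (fun k : ℕ => (L * A k + Y k ω) / k) atTop (𝓝 (L * δ)) := by
    have := ((hZω'.const_mul L).add hYk)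
    rw [add_zero] at this
    apply this.congr
    intro k
    rw [add_div]
    congr 1
    rw [mul_div_assoc, div_eq_inv_mul]
  -- eventually the exponent is ≤ (L*δ/2) * k
  have hev : ∀ᶠ k : ℕ in atTop, (L * A k + Y k ω) ≤ (L * δ / 2) * k := by
    have hlt : L * δ < L * δ / 2 := by linarith
    filter_upwards [hg.eventually_lt_const hlt, eventually_ge_atTop 1] with k h1 h2
    have hk0 : (0 : ℝ) < (k : ℝ) := by exact_mod_cast h2
    calc L * A k + Y k ω = ((L * A k + Y k ω) / k) * k := by field_simp
    _ ≤ (L * δ / 2) * k := by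
        apply mul_le_mul_of_nonneg_right (le_of_lt h1) (le_of_lt hk0)
  -- geometric comparison
  set r : ℝ := Real.exp (L * δ / 2) with hr
  have hr1 : r < 1 := Real.exp_lt_one_iff.2 (by linarith)
  have hr0 : 0 ≤ r := (Real.exp_pos _).le
  apply Summable.of_norm_bounded_eventually (g := fun k => r ^ k)
    (summable_geometric_of_lt_one hr0 hr1)
  rw [Nat.cofinite_eq_atTop]
  filter_upwards [hev] with k hk
  have hAcast : ((∑ i ∈ range k, X i ω : ℤ) : ℝ) = A k := by
    push_cast [hA, hZdef]
    rfl
  have hpow : ((q : ℝ) / p) ^ (∑ i ∈ range k, X i ω) = Real.exp (L * A k) := by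
    rw [← Real.rpow_intCast, Real.rpow_def_of_pos hx, hAcast]
  have hBle : |B k ω| ≤ Real.exp (Y k ω) := by
    rw [show Y k ω = Real.log (1 + |B k ω|) from rfl,
      Real.exp_log (by positivity)]
    linarith [abs_nonneg (B k ω)]
  calc ‖((q : ℝ) / p) ^ (∑ i ∈ range k, X i ω) * B k ω‖
      = ((q : ℝ) / p) ^ (∑ i ∈ range k, X i ω) * |B k ω| := by
        rw [norm_mul, Real.norm_eq_abs, Real.norm_eq_abs,
          abs_of_pos (zpow_pos hx _)]
    _ ≤ Real.exp (L * A k) * Real.exp (Y k ω) := by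
        rw [hpow]
        exact mul_le_mul_of_nonneg_left hBle (Real.exp_pos _).le
    _ = Real.exp (L * A k + Y k ω) := (Real.exp_add _ _).symm
    _ ≤ Real.exp ((L * δ / 2) * k) := Real.exp_le_exp.2 hk
    _ = r ^ k := by rw [mul_comm, Real.exp_nat_mul]
end

section
/- Let T be a locally finite tree with base vertex o, and let (x_n) be a sequence of vertices such that liminf_n d(o,x_n)/n > 0 and d(x_n, x_{n+1})/n → 0, where d is the graph metric. Then (x_n) converges to an end of T in the end compactification. -/
/-!
In a tree, the geodesics from `o` to `a` and to `b` share their first `k` vertices as soon as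
the Gromov product `(a | b)_o` is at least `k`. For a regular sequence, `d(o, xₙ)` grows
linearly while `d(xₙ, xₙ₊₁)` is sublinear, so `(xₙ | xₙ₊₁)_o → ∞`: for each `m`, the `m`-th
vertex of the geodesic from `o` to `xₙ` is eventually constant, and these limits form a ray.
-/

open Filter SimpleGraph Walk

lemma exists_eventually_eq_of_eventually_eq_succ {α : Type*} {f : ℕ → α}
    (h : ∀ᶠ n in atTop, f n = f (n + 1)) : ∃ a, ∀ᶠ n in atTop, f n = a := by
  obtain ⟨N, hN⟩ := eventually_atTop.1 h
  refine ⟨f N, eventually_atTop.2 ⟨N, fun n hn => ?_⟩⟩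
  induction n, hn using Nat.le_induction with
  | base => rfl
  | succ n hn ih => rw [← hN n hn, ih]

section LinearGrowth

variable {a b : ℕ → ℕ}

lemma exists_pos_eventually_mul_lt_of_liminf_div_pos
    (ha : 0 < liminf (fun n => (a n : ℝ) / n) atTop) :
    ∃ c : ℝ, 0 < c ∧ ∀ᶠ n in atTop, c * n < a n := by
  have hbdd : IsBoundedUnder (· ≥ ·) atTop (fun n => (a n : ℝ) / n) :=
    isBoundedUnder_of_eventually_ge (Eventually.of_forall fun n => by positivity)
  refine ⟨_, half_pos ha, ?_⟩
  filter_upwards [eventually_lt_of_lt_liminf (half_lt_self ha) hbdd, eventually_gt_atTop 0]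
    with n hn hpos
  exact (lt_div_iff₀ (by positivity)).1 hn

lemma tendsto_atTop_of_liminf_div_pos (ha : 0 < liminf (fun n => (a n : ℝ) / n) atTop) :
    Tendsto a atTop atTop := by
  obtain ⟨c, hc, hlt⟩ := exists_pos_eventually_mul_lt_of_liminf_div_pos ha
  exact tendsto_natCast_atTop_iff.1 <| tendsto_atTop_mono' _ (hlt.mono fun _ h => h.le) <|
    tendsto_natCast_atTop_atTop.const_mul_atTop hc

lemma eventually_le_of_liminf_div_pos_of_tendsto_div_zero
    (ha : 0 < liminf (fun n => (a n : ℝ) / n) atTop)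
    (hb : Tendsto (fun n => (b n : ℝ) / n) atTop (nhds 0)) :
    ∀ᶠ n in atTop, b n ≤ a n := by
  obtain ⟨c, hc, hlt⟩ := exists_pos_eventually_mul_lt_of_liminf_div_pos ha
  filter_upwards [hlt, hb.eventually_lt_const hc, eventually_gt_atTop 0] with n han hbn hpos
  have hbn' : (b n : ℝ) < c * n := (div_lt_iff₀ (by positivity)).1 hbn
  exact_mod_cast (hbn'.trans han).le

end LinearGrowth

namespace SimpleGraph

variable {V : Type*} {G : SimpleGraph V}

namespace Walk

variable {u v w : V}

lemma dist_add_dist_le_length (p : G.Walk u v) (hw : w ∈ p.support) :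
    G.dist u w + G.dist w v ≤ p.length := by
  classical
  calc G.dist u w + G.dist w v ≤ (p.takeUntil w hw).length + (p.dropUntil w hw).length :=
        add_le_add (dist_le _) (dist_le _)
    _ = p.length := by rw [← length_append, take_spec]

lemma dist_add_dist_eq_of_length_eq_dist {p : G.Walk u v} (hp : p.length = G.dist u v)
    (hw : w ∈ p.support) : G.dist u w + G.dist w v = G.dist u v := by
  classical
  exact le_antisymm (hp ▸ p.dist_add_dist_le_length hw)
    ((p.takeUntil w hw).reachable.dist_triangle_left v)

end Walk

namespace IsTree

variable (hG : G.IsTree) (o : V) {a b : V}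

noncomputable def geodesic (u v : V) : G.Walk u v :=
  (hG.connected.exists_path_of_dist u v).choose

lemma geodesic_isPath (u v : V) : (hG.geodesic u v).IsPath :=
  (hG.connected.exists_path_of_dist u v).choose_spec.1

lemma length_geodesic (u v : V) : (hG.geodesic u v).length = G.dist u v :=
  (hG.connected.exists_path_of_dist u v).choose_spec.2

/-- One of the two geodesics from `o` is the other one extended by the edge `ab`. -/
lemma getVert_geodesic_eq_of_adj (hab : G.Adj a b) {k : ℕ} (hka : k ≤ G.dist o a)
    (hkb : k ≤ G.dist o b) :
    (hG.geodesic o a).getVert k = (hG.geodesic o b).getVert k := by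
  wlog ha : a ∈ (hG.geodesic o b).support generalizing a b
  · have hb := hG.isAcyclic.mem_support_of_ne_mem_support_of_adj_of_isPath
      (hG.geodesic_isPath o a) (hG.geodesic_isPath o b) hab ha
    exact (this hab.symm hkb hka hb).symm
  rw [hG.isAcyclic.path_concat (hG.geodesic_isPath o a) (hG.geodesic_isPath o b) hab ha,
    concat_eq_append, getVert_append', if_pos (by rwa [length_geodesic])]

lemma getVert_geodesic_eq_of_walk (w : G.Walk a b) {k : ℕ}
    (hw : ∀ v ∈ w.support, k ≤ G.dist o v) :
    (hG.geodesic o a).getVert k = (hG.geodesic o b).getVert k := by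
  induction w with
  | nil => rfl
  | cons hadj w ih =>
    simp only [support_cons, List.mem_cons, forall_eq_or_imp] at hw
    rw [hG.getVert_geodesic_eq_of_adj o hadj hw.1 (hw.2 _ w.start_mem_support)]
    exact ih hw.2

lemma getVert_geodesic_eq_of_gromov {k : ℕ}
    (hk : G.dist a b + 2 * k ≤ G.dist o a + G.dist o b) :
    (hG.geodesic o a).getVert k = (hG.geodesic o b).getVert k := by
  obtain ⟨w, hw⟩ := hG.connected.exists_walk_length_eq_dist a b
  refine hG.getVert_geodesic_eq_of_walk o w fun v hv => ?_
  have hsplit := w.dist_add_dist_le_length hv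
  have hoa : G.dist o a ≤ G.dist o v + G.dist v a := hG.connected.dist_triangle
  have hob : G.dist o b ≤ G.dist o v + G.dist v b := hG.connected.dist_triangle
  rw [dist_comm (u := a)] at hsplit
  omega

lemma exists_ray_of_getVert_geodesic_eventually_eq_succ (y : ℕ → V)
    (hy : Tendsto (fun n => G.dist o (y n)) atTop atTop)
    (hstab : ∀ m, ∀ᶠ n in atTop,
      (hG.geodesic o (y n)).getVert m = (hG.geodesic o (y (n + 1))).getVert m) :
    ∃ ξ : ℕ → V, ξ 0 = o ∧ (∀ m, G.Adj (ξ m) (ξ (m + 1))) ∧ (∀ m, ξ (m + 2) ≠ ξ m) ∧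
      ∀ m, ∀ᶠ n in atTop, G.dist o (y n) = G.dist o (ξ m) + G.dist (ξ m) (y n) := by
  choose ξ hξ using fun m => exists_eventually_eq_of_eventually_eq_succ (hstab m)
  have hfar (m : ℕ) : ∀ᶠ n in atTop, m < (hG.geodesic o (y n)).length := by
    simpa only [length_geodesic] using hy.eventually_gt_atTop m
  refine ⟨ξ, ?_, fun m => ?_, fun m => ?_, fun m => ?_⟩
  · obtain ⟨n, hn⟩ := (hξ 0).exists
    rw [← hn, getVert_zero]
  · obtain ⟨n, h₀, h₁, hlen⟩ := ((hξ m).and ((hξ (m + 1)).and (hfar m))).exists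
    rw [← h₀, ← h₁]
    exact adj_getVert_succ _ hlen
  · obtain ⟨n, h₀, h₂, hlen⟩ := ((hξ m).and ((hξ (m + 2)).and (hfar (m + 1)))).exists
    rw [← h₀, ← h₂]
    intro h
    have := (hG.geodesic_isPath o (y n)).getVert_injOn (by simp only [Set.mem_ofPred_eq]; omega)
      (by simp only [Set.mem_ofPred_eq]; omega) h
    omega
  · filter_upwards [hξ m] with n hn
    rw [← hn]
    exact (dist_add_dist_eq_of_length_eq_dist (hG.length_geodesic o (y n))
      (getVert_mem_support _ m)).symm

end IsTree

end SimpleGraph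

theorem regular_sequence_converges_to_end_general {V : Type*} (G : SimpleGraph V)
    (hconn : G.Connected) (hacyclic : G.IsAcyclic)
    (o : V) (x : ℕ → V)
    (h1 : 0 < atTop.liminf (fun n => (G.dist o (x n) : ℝ) / n))
    (h2 : Tendsto (fun n => (G.dist (x n) (x (n + 1)) : ℝ) / n) atTop (nhds 0)) :
    ∃ ξ : ℕ → V, ξ 0 = o ∧ (∀ m, G.Adj (ξ m) (ξ (m + 1))) ∧ (∀ m, ξ (m + 2) ≠ ξ m) ∧
      ∀ m, ∀ᶠ n in atTop, G.dist o (x n) = G.dist o (ξ m) + G.dist (ξ m) (x n) := by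
  have hG : G.IsTree := ⟨hconn, hacyclic⟩
  have hfar := tendsto_atTop_of_liminf_div_pos h1
  refine hG.exists_ray_of_getVert_geodesic_eventually_eq_succ o x hfar fun m => ?_
  filter_upwards [eventually_le_of_liminf_div_pos_of_tendsto_div_zero h1 h2,
    ((tendsto_add_atTop_iff_nat 1).2 hfar).eventually_ge_atTop (2 * m)] with n hstep hnext
  exact hG.getVert_geodesic_eq_of_gromov o (by omega)

/-- Every regular sequence in a locally finite tree converges to an end: if
`liminf d(o,xₙ)/n > 0` and `d(xₙ,xₙ₊₁)/n → 0`, then there is an infinite reduced path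
(ray) `ξ` starting at `o` such that for every `m` the geodesic from `o` to `xₙ`
eventually passes through `ξ m`; i.e. `(xₙ)` converges to the end determined by `ξ`
in the end compactification. -/
theorem regular_sequence_converges_to_end {V : Type*} (G : SimpleGraph V)
    (hconn : G.Connected) (hacyclic : G.IsAcyclic)
    (hlocfin : ∀ v : V, (G.neighborSet v).Finite)
    (o : V) (x : ℕ → V)
    (h1 : 0 < atTop.liminf (fun n => (G.dist o (x n) : ℝ) / n))
    (h2 : Tendsto (fun n => (G.dist (x n) (x (n + 1)) : ℝ) / n) atTop (nhds 0)) :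
    ∃ ξ : ℕ → V, ξ 0 = o ∧ (∀ m, G.Adj (ξ m) (ξ (m + 1))) ∧ (∀ m, ξ (m + 2) ≠ ξ m) ∧
      ∀ m, ∀ᶠ n in atTop, G.dist o (x n) = G.dist o (ξ m) + G.dist (ξ m) (x n) :=
  regular_sequence_converges_to_end_general G hconn hacyclic o x h1 h2
end

section
/- Let ν be a probability measure on a measurable space equipped with a left action of a countable group G, and let μ be a probability measure on G whose support generates G as a semigroup. Suppose ν is μ-stationary, i.e. ν(A) = ∑_{g∈G} μ(g) ν(g^{-1}A) for all measurable A, and suppose every point has an infinite G-orbit with all orbit points measurable. Then ν is non-atomic. -/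
/-!
Take an atom `p` of maximal mass `a > 0`; it exists because a finite measure has only finitely
many atoms of mass at least that of a given one. Stationarity writes `ν {q}` as the
`μ`-average of the masses `ν {g⁻¹ • q}`, all at most `a`, so for an atom `q` of mass `a` every
`g⁻¹ • q` with `μ g > 0` has mass `a` too. Since the support of `μ` generates `G` as a semigroup,
the whole orbit of `p` consists of atoms of mass `a`, and an infinite set of such atoms has
infinite measure.
-/

open MeasureTheory

namespace ENNReal

theorem eq_of_tsum_mul_eq_of_le {ι : Type*} {w f : ι → ℝ≥0∞} {a : ℝ≥0∞}
    (hw : ∑' i, w i = 1) (hf : ∀ i, f i ≤ a) (ha : a ≠ ∞) (h : ∑' i, w i * f i = a)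
    {i : ι} (hi : w i ≠ 0) : f i = a := by
  by_contra hne
  have hwi : w i ≠ ∞ := ne_top_of_le_ne_top one_ne_top (hw ▸ ENNReal.le_tsum i)
  have hlt : ∑' j, w j * f j < ∑' j, w j * a :=
    ENNReal.tsum_lt_tsum (h ▸ ha) (fun j => mul_le_mul_right (hf j) _)
      ((ENNReal.mul_lt_mul_iff_right hi hwi).mpr ((hf i).lt_of_ne hne))
  rw [ENNReal.tsum_mul_right, hw, one_mul, h] at hlt
  exact hlt.false

end ENNReal

section Atoms

variable {α : Type*} [MeasurableSpace α] [MeasurableSingletonClass α]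
  (ν : Measure α) [IsFiniteMeasure ν]

theorem finite_setOf_le_measure_singleton {ε : ENNReal} (hε : ε ≠ 0) :
    {x | ε ≤ ν {x}}.Finite :=
  Set.not_infinite.mp fun hs => measure_ne_top ν _ (hs.meas_eq_top ⟨ε, hε, fun _ hx => hx⟩)

theorem exists_forall_measure_singleton_le {x : α} (hx : ν {x} ≠ 0) :
    ∃ p, ν {x} ≤ ν {p} ∧ ∀ y, ν {y} ≤ ν {p} := by
  obtain ⟨p, hp, hmax⟩ := Set.exists_max_image _ (fun y => ν {y})
    (finite_setOf_le_measure_singleton ν hx) ⟨x, le_rfl (a := ν {x})⟩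
  refine ⟨p, hp, fun y => ?_⟩
  by_cases hy : ν {x} ≤ ν {y}
  · exact hmax y hy
  · exact (not_le.mp hy).le.trans hp

end Atoms

theorem MulAction.orbit_subset_of_closure_eq_top {G α : Type*} [Group G] [MulAction G α]
    {S : Set G} (hS : Subsemigroup.closure S = ⊤) {s : Set α}
    (hs : ∀ g ∈ S, ∀ q ∈ s, g⁻¹ • q ∈ s) {p : α} (hp : p ∈ s) : MulAction.orbit G p ⊆ s := by
  have hall : ∀ g : G, ∀ q ∈ s, g⁻¹ • q ∈ s := fun g => by
    induction (hS ▸ Subsemigroup.mem_top g : g ∈ Subsemigroup.closure S)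
      using Subsemigroup.closure_induction with
    | mem g hg => exact hs g hg
    | mul g h _ _ hg hh => exact fun q hq => by rw [mul_inv_rev, mul_smul]; exact hh _ (hg q hq)
  rintro _ ⟨g, rfl⟩
  simpa using hall g⁻¹ p hp

theorem stationary_measure_nonatomic_general {G α : Type*} [Group G]
    [MeasurableSpace α] [MulAction G α]
    (ν : Measure α) [IsProbabilityMeasure ν]
    (μ : G → ENNReal) (hμ1 : ∑' g, μ g = 1)
    (hgen : Subsemigroup.closure {g : G | 0 < μ g} = ⊤)
    (hstat : ∀ A : Set α, MeasurableSet A →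
      ν A = ∑' g : G, μ g * ν ((fun x => g • x) ⁻¹' A))
    (horbit : ∀ x : α, (MulAction.orbit G x).Infinite)
    (hmeas : ∀ (g : G) (x : α), MeasurableSet ({g • x} : Set α)) :
    ∀ x : α, ν {x} = 0 := by
  have : MeasurableSingletonClass α := ⟨fun y => by simpa using hmeas 1 y⟩
  have hstat_singleton (q : α) : ν {q} = ∑' g, μ g * ν {g⁻¹ • q} := by
    simpa only [Set.preimage_smul, Set.smul_set_singleton] using hstat {q} (.singleton q)
  intro x
  by_contra hx
  obtain ⟨p, hxp, hmax⟩ := exists_forall_measure_singleton_le ν hx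
  have hpos : ν {p} ≠ 0 := (pos_iff_ne_zero.mpr hx).trans_le hxp |>.ne'
  have hmaximal : ∀ g ∈ {g : G | 0 < μ g}, ∀ q ∈ {y | ν {y} = ν {p}},
      g⁻¹ • q ∈ {y | ν {y} = ν {p}} := fun g hg q hq =>
    ENNReal.eq_of_tsum_mul_eq_of_le hμ1 (fun h => hmax (h⁻¹ • q)) (measure_ne_top ν _)
      ((hstat_singleton q).symm.trans hq) hg.ne'
  have horbit_maximal : MulAction.orbit G p ⊆ {y | ν {y} = ν {p}} :=
    MulAction.orbit_subset_of_closure_eq_top hgen hmaximal rfl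
  exact measure_ne_top ν _ <|
    (horbit p).meas_eq_top ⟨ν {p}, hpos, fun y hy => (horbit_maximal hy).ge⟩

/-- Let `ν` be a probability measure on a space with a left action of a countable group
`G`, and let `μ` be a probability measure on `G` whose support generates `G` as a
semigroup. If `ν` is `μ`-stationary and every point has an infinite `G`-orbit with
measurable orbit points, then `ν` is non-atomic: every singleton is null. -/
theorem stationary_measure_nonatomic {G α : Type*} [Group G] [Countable G]
    [MeasurableSpace α] [MulAction G α]
    (ν : Measure α) [IsProbabilityMeasure ν]
    (μ : G → ENNReal) (hμ1 : ∑' g, μ g = 1)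
    (hgen : Subsemigroup.closure {g : G | 0 < μ g} = ⊤)
    (hstat : ∀ A : Set α, MeasurableSet A →
      ν A = ∑' g : G, μ g * ν ((fun x => g • x) ⁻¹' A))
    (horbit : ∀ x : α, (MulAction.orbit G x).Infinite)
    (hmeas : ∀ (g : G) (x : α), MeasurableSet ({g • x} : Set α)) :
    ∀ x : α, ν {x} = 0 :=
  stationary_measure_nonatomic_general ν μ hμ1 hgen hstat horbit hmeas
end
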